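/- Let Γ be a quiver with vertex set Γ₀ and arrow set Γ₁, and let Γ̂ be its universal abelian covering quiver. The group ℤ^{Γ₁} acts on finitely-supported dimension vectors of Γ̂ by (ξ.β)_{i,χ} = β_{i,χ+ξ}, and the projection c: β ↦ (∑_χ β_{i,χ})_i is invariant under this action. Moreover, for every dimension vector α of Γ, there are only finitely many ℤ^{Γ₁}-orbits of dimension vectors β of Γ̂ with connected support satisfying c(β) = α. -/

import Mathlib

/-!
Translation by `ξ` only permutes the summands of `c(β)_i`. For finiteness, translate `β` so that
a vertex of its support lies over `χ = 0`. Adjacent vertices of `Γ̂` differ by a standard basis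
vector, so along a path in the support every coordinate of `χ` moves by at most one per step and
hence runs through all intermediate integers. Each coordinate therefore ranges over fewer than
`#supp β ≤ ∑ α` values, and every orbit meets the finite set of dimension vectors supported on
`Γ₀ × [-N, N]^{Γ₁}` with values bounded by `α`, where `N = ∑ α`.
-/

variable (Γ₀ Γ₁ : Type*) [Fintype Γ₀] [DecidableEq Γ₀] [Fintype Γ₁] [DecidableEq Γ₁]
  (s t : Γ₁ → Γ₀)

/-- Adjacency (in either direction) in the universal abelian covering quiver `Γ̂`. -/
def coverAdj (p q : Γ₀ × (Γ₁ → ℤ)) : Prop :=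
  ∃ (a : Γ₁) (χ : Γ₁ → ℤ),
    (p = (s a, χ) ∧ q = (t a, χ + Pi.single a 1)) ∨
    (q = (s a, χ) ∧ p = (t a, χ + Pi.single a 1))

/-- The projection `c : β ↦ (∑_χ β_{i,χ})_i` from dimension vectors of `Γ̂` to
dimension vectors of `Γ`. -/
def cmap (β : (Γ₀ × (Γ₁ → ℤ)) →₀ ℕ) (i : Γ₀) : ℕ :=
  β.sum fun p n => if p.1 = i then n else 0

/-- Connectedness of the support of a dimension vector of `Γ̂`. -/
def ConnSupp (β : (Γ₀ × (Γ₁ → ℤ)) →₀ ℕ) : Prop :=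
  ∀ p ∈ β.support, ∀ q ∈ β.support,
    Relation.EqvGen
      (fun x y => x ∈ β.support ∧ y ∈ β.support ∧ coverAdj Γ₀ Γ₁ s t x y) p q

/-- The translation action of `ℤ^{Γ₁}` on dimension vectors of `Γ̂`, as an
equivalence relation on those with connected support and `c β = α`. -/
def translSetoid (α : Γ₀ → ℕ) :
    Setoid {β : (Γ₀ × (Γ₁ → ℤ)) →₀ ℕ //
      ConnSupp Γ₀ Γ₁ s t β ∧ ∀ i, cmap Γ₀ Γ₁ β i = α i} where
  r β β' := ∃ ξ : Γ₁ → ℤ, ∀ p : Γ₀ × (Γ₁ → ℤ),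
    (β' : (Γ₀ × (Γ₁ → ℤ)) →₀ ℕ) p = (β : (Γ₀ × (Γ₁ → ℤ)) →₀ ℕ) (p.1, p.2 + ξ)
  iseqv := by
    constructor
    · intro β; exact ⟨0, fun p => by simp⟩
    · rintro β β' ⟨ξ, h⟩
      exact ⟨-ξ, fun p => by rw [h (p.1, p.2 + -ξ)]; simp⟩
    · rintro β β' β'' ⟨ξ, h⟩ ⟨ξ', h'⟩
      refine ⟨ξ + ξ', fun p => ?_⟩
      rw [h' p, h (p.1, p.2 + ξ')]
      have e : p.2 + ξ' + ξ = p.2 + (ξ + ξ') := by abel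
      rw [e]

open Relation Finset

theorem Relation.ReflTransGen.uIcc_subset_image {X : Type*} {r : X → X → Prop} {f : X → ℤ}
    (hr : ∀ x y, r x y → |f x - f y| ≤ 1) {p q : X} (h : ReflTransGen r p q) :
    Set.uIcc (f p) (f q) ⊆ f '' {x | ReflTransGen r p x} := by
  induction h with
  | refl =>
    rw [Set.uIcc_self, Set.singleton_subset_iff]
    exact ⟨p, .refl, rfl⟩
  | @tail q q' hpq hqq' ih =>
    intro m hm
    by_cases hm' : m ∈ Set.uIcc (f p) (f q)
    · exact ih hm'
    · have hstep := abs_le.mp (hr q q' hqq')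
      simp only [Set.mem_uIcc] at hm hm'
      exact ⟨q', hpq.tail hqq', by omega⟩

section CoveringQuiver

variable {Γ₀ Γ₁ s t}
omit [Fintype Γ₀] [DecidableEq Γ₀] [Fintype Γ₁]

theorem abs_sub_le_one_of_coverAdj {p q : Γ₀ × (Γ₁ → ℤ)} (h : coverAdj Γ₀ Γ₁ s t p q)
    (a : Γ₁) : |p.2 a - q.2 a| ≤ 1 := by
  obtain ⟨b, χ, ⟨rfl, rfl⟩ | ⟨rfl, rfl⟩⟩ := h <;>
    · by_cases hab : a = b <;> simp [hab]

theorem coverAdj_add_right {p q : Γ₀ × (Γ₁ → ℤ)} (h : coverAdj Γ₀ Γ₁ s t p q) (ξ : Γ₁ → ℤ) :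
    coverAdj Γ₀ Γ₁ s t (p.1, p.2 + ξ) (q.1, q.2 + ξ) := by
  obtain ⟨a, χ, ⟨rfl, rfl⟩ | ⟨rfl, rfl⟩⟩ := h
  · exact ⟨a, χ + ξ, Or.inl ⟨rfl, by simp only [add_right_comm]⟩⟩
  · exact ⟨a, χ + ξ, Or.inr ⟨rfl, by simp only [add_right_comm]⟩⟩

variable (s t) in
def suppAdj (β : (Γ₀ × (Γ₁ → ℤ)) →₀ ℕ) (x y : Γ₀ × (Γ₁ → ℤ)) : Prop :=
  x ∈ β.support ∧ y ∈ β.support ∧ coverAdj Γ₀ Γ₁ s t x y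

theorem abs_sub_lt_card_support {β : (Γ₀ × (Γ₁ → ℤ)) →₀ ℕ} (hβ : ConnSupp Γ₀ Γ₁ s t β)
    {p q : Γ₀ × (Γ₁ → ℤ)} (hp : p ∈ β.support) (hq : q ∈ β.support) (a : Γ₁) :
    |p.2 a - q.2 a| < #β.support := by
  have hpath : EqvGen (suppAdj s t β) p q := hβ p hp q hq
  rw [← EqvGen.reflTransGen_symmGen] at hpath
  have hstep : ∀ x y, SymmGen (suppAdj s t β) x y → |x.2 a - y.2 a| ≤ 1 := by
    rintro x y (h | h)
    · exact abs_sub_le_one_of_coverAdj h.2.2 a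
    · exact abs_sub_comm (x.2 a) _ ▸ abs_sub_le_one_of_coverAdj h.2.2 a
  have hsupp : ∀ x, ReflTransGen (SymmGen (suppAdj s t β)) p x → x ∈ β.support := by
    intro x hx
    induction hx with
    | refl => exact hp
    | tail _ h _ => rcases h with h | h; exacts [h.2.1, h.1]
  have hcover : uIcc (p.2 a) (q.2 a) ⊆ β.support.image (·.2 a) := by
    intro m hm
    obtain ⟨x, hx, rfl⟩ := hpath.uIcc_subset_image (f := (·.2 a)) hstep
      (by rwa [← Finset.coe_uIcc, Finset.mem_coe])
    exact mem_image_of_mem _ (hsupp x hx)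
  calc |p.2 a - q.2 a| < #(uIcc (p.2 a) (q.2 a)) := by
        rw [Int.card_uIcc, Nat.cast_add, Nat.cast_one, Int.natCast_natAbs, abs_sub_comm]
        exact lt_add_one _
    _ ≤ #(β.support.image (·.2 a)) := by exact_mod_cast card_le_card hcover
    _ ≤ #β.support := by exact_mod_cast card_image_le

def transl (ξ : Γ₁ → ℤ) (β : (Γ₀ × (Γ₁ → ℤ)) →₀ ℕ) : (Γ₀ × (Γ₁ → ℤ)) →₀ ℕ :=
  Finsupp.equivMapDomain ((Equiv.refl Γ₀).prodCongr (Equiv.addRight ξ)).symm β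

omit [DecidableEq Γ₁] in
@[simp]
theorem transl_apply (ξ : Γ₁ → ℤ) (β : (Γ₀ × (Γ₁ → ℤ)) →₀ ℕ) (p : Γ₀ × (Γ₁ → ℤ)) :
    transl ξ β p = β (p.1, p.2 + ξ) :=
  rfl

omit [DecidableEq Γ₁] in
theorem mem_support_transl {ξ : Γ₁ → ℤ} {β : (Γ₀ × (Γ₁ → ℤ)) →₀ ℕ} {p : Γ₀ × (Γ₁ → ℤ)} :
    p ∈ (transl ξ β).support ↔ (p.1, p.2 + ξ) ∈ β.support := by
  simp only [Finsupp.mem_support_iff, transl_apply]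

omit [DecidableEq Γ₁] in
theorem eq_transl_of_apply {ξ : Γ₁ → ℤ} {β β' : (Γ₀ × (Γ₁ → ℤ)) →₀ ℕ}
    (h : ∀ p : Γ₀ × (Γ₁ → ℤ), β' p = β (p.1, p.2 + ξ)) : β' = transl ξ β :=
  Finsupp.ext h

theorem connSupp_transl {β : (Γ₀ × (Γ₁ → ℤ)) →₀ ℕ} (hβ : ConnSupp Γ₀ Γ₁ s t β)
    (ξ : Γ₁ → ℤ) : ConnSupp Γ₀ Γ₁ s t (transl ξ β) := by
  intro p hp q hq
  rw [mem_support_transl] at hp hq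
  have hpath : EqvGen (suppAdj s t β) _ _ := hβ _ hp _ hq
  have hstep : ∀ x y, suppAdj s t β x y →
      suppAdj s t (transl ξ β) (x.1, x.2 - ξ) (y.1, y.2 - ξ) := fun x y ⟨hx, hy, hxy⟩ =>
    ⟨by simpa [mem_support_transl] using hx, by simpa [mem_support_transl] using hy,
      by simpa [sub_eq_add_neg] using coverAdj_add_right hxy (-ξ)⟩
  show EqvGen (suppAdj s t (transl ξ β)) p q
  rw [← EqvGen.reflTransGen_symmGen] at hpath ⊢
  simpa only [Function.onFun, add_sub_cancel_right] using
    hpath.lift (p := SymmGen (suppAdj s t (transl ξ β))) (fun x => (x.1, x.2 - ξ))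
      fun x y h => h.imp (hstep x y) (hstep y x)

theorem exists_abs_transl_lt_card_support {β : (Γ₀ × (Γ₁ → ℤ)) →₀ ℕ}
    (hβ : ConnSupp Γ₀ Γ₁ s t β) :
    ∃ ξ : Γ₁ → ℤ, ∀ q ∈ (transl ξ β).support, ∀ a, |q.2 a| < #β.support := by
  rcases eq_or_ne β 0 with rfl | hβ0
  · exact ⟨0, fun q hq => by simp at hq⟩
  obtain ⟨p₀, hp₀⟩ := Finsupp.support_nonempty_iff.mpr hβ0
  refine ⟨p₀.2, fun q hq a => ?_⟩
  rw [mem_support_transl] at hq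
  simpa using abs_sub_lt_card_support hβ hq hp₀ a

end CoveringQuiver

noncomputable def coordBox (n : ℕ) : Finset (Γ₀ × (Γ₁ → ℤ)) :=
  univ ×ˢ Fintype.piFinset fun _ => Icc (-n : ℤ) n

section Projection

variable {Γ₀ Γ₁}
omit [Fintype Γ₁] [DecidableEq Γ₁]

omit [Fintype Γ₀] in
theorem cmap_transl (ξ : Γ₁ → ℤ) (β : (Γ₀ × (Γ₁ → ℤ)) →₀ ℕ) :
    cmap Γ₀ Γ₁ (transl ξ β) = cmap Γ₀ Γ₁ β := by
  ext i
  simp [cmap, transl]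

omit [Fintype Γ₀] in
theorem apply_le_cmap (β : (Γ₀ × (Γ₁ → ℤ)) →₀ ℕ) (p : Γ₀ × (Γ₁ → ℤ)) :
    β p ≤ cmap Γ₀ Γ₁ β p.1 := by
  by_cases hp : p ∈ β.support
  · have := single_le_sum (f := fun q => if q.1 = p.1 then β q else 0)
      (fun q _ => Nat.zero_le _) hp
    simpa [cmap, Finsupp.sum] using this
  · simp [Finsupp.notMem_support_iff.mp hp]

theorem card_support_le_sum_cmap (β : (Γ₀ × (Γ₁ → ℤ)) →₀ ℕ) :
    #β.support ≤ ∑ i, cmap Γ₀ Γ₁ β i := by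
  calc #β.support ≤ ∑ p ∈ β.support, β p := by
        simpa using card_nsmul_le_sum β.support β 1 fun p hp =>
          Nat.one_le_iff_ne_zero.mpr (Finsupp.mem_support_iff.mp hp)
    _ = ∑ i, cmap Γ₀ Γ₁ β i := by
        simp only [cmap, Finsupp.sum]
        rw [sum_comm]
        simp

end Projection

variable {Γ₀ Γ₁ s t} in
theorem exists_transl_mem_finsupp {β : (Γ₀ × (Γ₁ → ℤ)) →₀ ℕ} (hβ : ConnSupp Γ₀ Γ₁ s t β) :
    ∃ ξ : Γ₁ → ℤ, transl ξ β ∈ (coordBox Γ₀ Γ₁ (∑ i, cmap Γ₀ Γ₁ β i)).finsupp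
      fun p => Iic (cmap Γ₀ Γ₁ β p.1) := by
  obtain ⟨ξ, hξ⟩ := exists_abs_transl_lt_card_support hβ
  refine ⟨ξ, mem_finsupp_iff.mpr ⟨fun q hq => ?_, fun p _ => ?_⟩⟩
  · have hbound : ∀ a, |q.2 a| ≤ ∑ i, cmap Γ₀ Γ₁ β i := fun a =>
      (hξ q hq a).le.trans (by exact_mod_cast card_support_le_sum_cmap β)
    simpa [coordBox, abs_le] using hbound
  · simpa [cmap_transl] using apply_le_cmap (transl ξ β) p

theorem finite_quotient_translSetoid (α : Γ₀ → ℕ) :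
    Finite (Quotient (translSetoid Γ₀ Γ₁ s t α)) := by
  set reps := (coordBox Γ₀ Γ₁ (∑ i, α i)).finsupp fun p => Iic (α p.1)
  have hreps : ∀ x : Quotient (translSetoid Γ₀ Γ₁ s t α), ∃ y, y.1 ∈ reps ∧ ⟦y⟧ = x := by
    rintro ⟨β, hconn, hcmap⟩
    obtain ⟨ξ, hξ⟩ := exists_transl_mem_finsupp hconn
    rw [show cmap Γ₀ Γ₁ β = α from funext hcmap] at hξ
    exact ⟨⟨transl ξ β, connSupp_transl hconn ξ, by simpa [cmap_transl] using hcmap⟩, hξ,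
      (Quotient.sound (by exact ⟨ξ, fun _ => rfl⟩)).symm⟩
  let Reps := {y : {β // ConnSupp Γ₀ Γ₁ s t β ∧ ∀ i, cmap Γ₀ Γ₁ β i = α i} // y.1 ∈ reps}
  have : Finite Reps :=
    Finite.of_injective (fun y : Reps => (⟨y.1.1, y.2⟩ : reps)) fun _ _ h =>
      Subtype.ext (Subtype.ext (congrArg Subtype.val h :))
  exact Finite.of_surjective (fun y : Reps => ⟦y.1⟧) fun x =>
    let ⟨y, hy, hyx⟩ := hreps x; ⟨⟨y, hy⟩, hyx⟩

/-- The projection `c` is invariant under the translation action, and for every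
dimension vector `α` of `Γ` there are only finitely many translation orbits of
dimension vectors of `Γ̂` with connected support compatible with `α`. -/
theorem stmt14 :
    (∀ (ξ : Γ₁ → ℤ) (β β' : (Γ₀ × (Γ₁ → ℤ)) →₀ ℕ),
        (∀ p : Γ₀ × (Γ₁ → ℤ), β' p = β (p.1, p.2 + ξ)) →
        ∀ i, cmap Γ₀ Γ₁ β' i = cmap Γ₀ Γ₁ β i) ∧
      ∀ α : Γ₀ → ℕ, Finite (Quotient (translSetoid Γ₀ Γ₁ s t α)) :=
  ⟨fun ξ β _ h i => by rw [eq_transl_of_apply h, cmap_transl],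
    finite_quotient_translSetoid Γ₀ Γ₁ s t⟩
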